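/- Let b = (b_n)_n be a sequence of n-bandwidths and fix n, k ∈ ℕ. Then: (i) there are at most (k+1)^k equivalence classes in [n]^k_b under the relation of equal profile; (ii) for any s ∈ [n]^k_b: (a) #𝒯(s) ≤ k^k · n · b_n^{κ_1(s)+⋯+κ_k(s)}; (b) if the multigraph of s contains at least one odd edge, then #𝒯(s) ≤ k^k · n · b_n^{κ_1(s)+⋯+κ_k(s)−1}. -/

import Mathlib

open MeasureTheory ProbabilityTheory Filter Finset
open scoped BigOperators ENNReal NNReal Classical

noncomputable section

namespace RMT

variable {Ω : Type} [MeasurableSpace Ω]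

/-- A triangular scheme: for each `n`, a symmetric `n × n` matrix of (measurable) real-valued
random variables, with entries indexed by `{1, …, n}²`. -/
def IsTriangularScheme (a : ℕ → ℕ → ℕ → Ω → ℝ) : Prop :=
  ∀ n p q, p ∈ Finset.Icc 1 n → q ∈ Finset.Icc 1 n →
    a n p q = a n q p ∧ Measurable (a n p q)

/-- Condition (AAU1): distinct decay and boundedness, with constants `C k` and decay
parameter `α`.  The pairs `pq i` range over `{1,…,N}²`, are pairwise fundamentally
different (i.e. distinct as unordered pairs), and `δ i ≥ 1` are the multiplicities. -/
def AAU1 (P : Measure Ω) (a : ℕ → ℕ → ℕ → Ω → ℝ) (α : ℝ) (C : ℕ → ℝ) : Prop :=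
  ∀ (N l : ℕ) (pq : Fin l → ℕ × ℕ),
    (∀ i, (pq i).1 ∈ Finset.Icc 1 N ∧ (pq i).2 ∈ Finset.Icc 1 N) →
    (∀ i j, i ≠ j → s((pq i).1, (pq i).2) ≠ s((pq j).1, (pq j).2)) →
    ∀ n, N ≤ n → ∀ δ : Fin l → ℕ, (∀ i, 1 ≤ δ i) →
      |∫ ω, ∏ i, a n (pq i).1 (pq i).2 ω ^ δ i ∂P| ≤
        C (∑ i, δ i) / (n : ℝ) ^ (α * ((Finset.univ.filter fun i => δ i = 1).card : ℝ))

/-- Condition (AAU2): second moment condition with constants `C' l n`. -/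
def AAU2 (P : Measure Ω) (a : ℕ → ℕ → ℕ → Ω → ℝ) (C' : ℕ → ℕ → ℝ) : Prop :=
  ∀ (N l : ℕ) (pq : Fin l → ℕ × ℕ),
    (∀ i, (pq i).1 ∈ Finset.Icc 1 N ∧ (pq i).2 ∈ Finset.Icc 1 N) →
    (∀ i j, i ≠ j → s((pq i).1, (pq i).2) ≠ s((pq j).1, (pq j).2)) →
    ∀ n, N ≤ n →
      |(∫ ω, ∏ i, a n (pq i).1 (pq i).2 ω ^ 2 ∂P) - 1| ≤ C' l n

/-- Condition (AAU3): fourth moment condition with constants `D l n`. -/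
def AAU3 (P : Measure Ω) (a : ℕ → ℕ → ℕ → Ω → ℝ) (D : ℕ → ℕ → ℝ) : Prop :=
  ∀ (N l : ℕ) (hl : 0 < l) (pq : Fin l → ℕ × ℕ),
    (∀ i, (pq i).1 ∈ Finset.Icc 1 N ∧ (pq i).2 ∈ Finset.Icc 1 N) →
    (∀ i j, i ≠ j → s((pq i).1, (pq i).2) ≠ s((pq j).1, (pq j).2)) →
    ∀ n, N ≤ n →
      |∫ ω, a n (pq ⟨0, hl⟩).1 (pq ⟨0, hl⟩).2 ω ^ 4 *
          ((∏ i ∈ Finset.univ.erase ⟨0, hl⟩, a n (pq i).1 (pq i).2 ω ^ 2) - 1) ∂P| ≤ D l n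

/-- `α`-almost uncorrelated triangular scheme. -/
def AlmostUncorrelated (P : Measure Ω) (a : ℕ → ℕ → ℕ → Ω → ℝ) (α : ℝ) : Prop :=
  ∃ (C : ℕ → ℝ) (C' : ℕ → ℕ → ℝ),
    (∀ m, Tendsto (fun n => C' m n) atTop (nhds 0)) ∧ AAU1 P a α C ∧ AAU2 P a C'

/-- Strongly `α`-almost uncorrelated triangular scheme. -/
def StronglyAlmostUncorrelated (P : Measure Ω) (a : ℕ → ℕ → ℕ → Ω → ℝ) (α : ℝ) : Prop :=
  ∃ (C : ℕ → ℝ) (C' D : ℕ → ℕ → ℝ),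
    (∀ m, Tendsto (fun n => C' m n) atTop (nhds 0)) ∧
    (∀ m, Tendsto (fun n => D m n) atTop (nhds 0)) ∧
    AAU1 P a α C ∧ AAU2 P a C' ∧ AAU3 P a D

/-- Approximately uncorrelated triangular scheme (Hochstättler–Kirsch–Warzel). -/
def ApproxUncorrelated (P : Measure Ω) (a : ℕ → ℕ → ℕ → Ω → ℝ) : Prop :=
  ∃ (K : ℕ → ℕ → ℝ) (K' : ℕ → ℕ → ℝ),
    (∀ s m, 0 ≤ K s m) ∧ (∀ s n, 0 ≤ K' s n) ∧
    (∀ s, Tendsto (fun n => K' s n) atTop (nhds 0)) ∧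
    ∀ (N s m : ℕ) (pq : Fin (s + m) → ℕ × ℕ),
      (∀ i, (pq i).1 ∈ Finset.Icc 1 N ∧ (pq i).2 ∈ Finset.Icc 1 N) →
      (∀ i j : Fin (s + m), (i : ℕ) < s → i ≠ j →
        s((pq i).1, (pq i).2) ≠ s((pq j).1, (pq j).2)) →
      ∀ n, N ≤ n →
        |∫ ω, ∏ i, a n (pq i).1 (pq i).2 ω ∂P| ≤ K s m / (n : ℝ) ^ ((s : ℝ) / 2) ∧
        |(∫ ω, ∏ i ∈ Finset.univ.filter (fun i : Fin (s + m) => (i : ℕ) < s),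
            a n (pq i).1 (pq i).2 ω ^ 2 ∂P) - 1| ≤ K' s n

/-- A Wigner scheme: independent entries (up to symmetry), centered, unit variance,
with uniformly bounded moments of all orders. -/
def IsWignerScheme (P : Measure Ω) (a : ℕ → ℕ → ℕ → Ω → ℝ) : Prop :=
  IsTriangularScheme a ∧
  (∀ n : ℕ, iIndepFun (m := fun _ => (inferInstance : MeasurableSpace ℝ))
      (fun ij : {p : ℕ × ℕ // 1 ≤ p.1 ∧ p.1 ≤ p.2 ∧ p.2 ≤ n} => a n ij.1.1 ij.1.2) P) ∧
  (∀ n, ∀ p ∈ Finset.Icc 1 n, ∀ q ∈ Finset.Icc 1 n,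
      (∫ ω, a n p q ω ∂P) = 0 ∧ (∫ ω, a n p q ω ^ 2 ∂P) = 1) ∧
  (∀ k : ℕ, ∃ Cp : ℝ, ∀ n, ∀ p ∈ Finset.Icc 1 n, ∀ q ∈ Finset.Icc 1 n,
      (∫ ω, |a n p q ω| ^ k ∂P) ≤ Cp)

/-- `b` is an `n`-bandwidth: an odd number `< n`, or `n` itself. -/
def IsBandwidth (n b : ℕ) : Prop := (b < n ∧ Odd b) ∨ b = n

/-- The pair `(i,j) ∈ {1,…,n}²` is `bn`-relevant. -/
def BRelevant (n bn i j : ℕ) : Prop :=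
  bn = n ∨ |(i : ℤ) - (j : ℤ)| ≤ ((bn - 1) / 2 : ℕ) ∨
    (n : ℤ) - ((bn - 1) / 2 : ℕ) ≤ |(i : ℤ) - (j : ℤ)|

/-- The periodic random band matrix of dimension `n × n` based on the scheme `a` with
bandwidths `b` : entries `X_n(p,q) = b_n^{-1/2} a_n(p,q)` for `b_n`-relevant `(p,q)`, else `0`. -/
def bandMatrix (a : ℕ → ℕ → ℕ → Ω → ℝ) (b : ℕ → ℕ) (n : ℕ) (ω : Ω) :
    Matrix (Fin n) (Fin n) ℝ := fun i j =>
  if BRelevant n (b n) (i.1 + 1) (j.1 + 1)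
  then (Real.sqrt (b n))⁻¹ * a n (i.1 + 1) (j.1 + 1) ω else 0

/-- The empirical spectral distribution of a real symmetric matrix
(junk value `0` if the matrix is not symmetric). -/
def ESD {n : ℕ} (M : Matrix (Fin n) (Fin n) ℝ) : Measure ℝ :=
  if h : M.IsHermitian then
    ((n : ℝ≥0∞))⁻¹ • ∑ i : Fin n, Measure.dirac (h.eigenvalues i)
  else 0

/-- The semicircle distribution, with Lebesgue density
`(2π)⁻¹ √(4 - x²) 1_{[-2,2]}(x)`. -/
def semicircle : Measure ℝ :=
  volume.withDensity fun x =>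
    ENNReal.ofReal (if -2 ≤ x ∧ x ≤ 2 then (2 * Real.pi)⁻¹ * Real.sqrt (4 - x ^ 2) else 0)

/-- The semicircle law holds in probability for the random matrices `X n`. -/
def SemicircleLawInProbability (P : Measure Ω)
    (X : (n : ℕ) → Ω → Matrix (Fin n) (Fin n) ℝ) : Prop :=
  ∀ f : BoundedContinuousFunction ℝ ℝ,
    TendstoInMeasure P (fun n ω => ∫ x, f x ∂ ESD (X n ω)) atTop
      (fun _ => ∫ x, f x ∂ semicircle)

/-- The semicircle law holds almost surely for the random matrices `X n`. -/
def SemicircleLawAS (P : Measure Ω)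
    (X : (n : ℕ) → Ω → Matrix (Fin n) (Fin n) ℝ) : Prop :=
  ∀ f : BoundedContinuousFunction ℝ ℝ,
    ∀ᵐ ω ∂P, Tendsto (fun n => ∫ x, f x ∂ ESD (X n ω)) atTop
      (nhds (∫ x, f x ∂ semicircle))

/-- The family `Y` is Curie-Weiss(`β`, `card ι`)-distributed. -/
def IsCurieWeiss {ι : Type} [Fintype ι] (P : Measure Ω) (β : ℝ) (Y : ι → Ω → ℝ) : Prop :=
  (∀ i, Measurable (Y i)) ∧
  (∀ᵐ ω ∂P, ∀ i, Y i ω = 1 ∨ Y i ω = -1) ∧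
  ∃ Z : ℝ, 0 < Z ∧ ∀ y : ι → ℝ, (∀ i, y i = 1 ∨ y i = -1) →
    P {ω | ∀ i, Y i ω = y i} =
      ENNReal.ofReal (Z⁻¹ * Real.exp (β / (2 * Fintype.card ι) * (∑ i, y i) ^ 2))

/-- `Δ n = n (n+1) / 2`. -/
def Δn (n : ℕ) : ℕ := n * (n + 1) / 2

/-- Pair partitions of `{1, …, k}`, encoded as fixed-point-free involutions of `Fin k`. -/
def PairPartitions (k : ℕ) : Finset (Equiv.Perm (Fin k)) :=
  Finset.univ.filter fun π => ∀ r, π (π r) = r ∧ π r ≠ r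

/-- The product `∏_{{r,s} ∈ π} S (i r) (i s)` over the blocks of a pair partition `π`. -/
def pairProd {k m : ℕ} (S : Matrix (Fin m) (Fin m) ℝ) (i : Fin k → Fin m)
    (π : Equiv.Perm (Fin k)) : ℝ :=
  ∏ r ∈ Finset.univ.filter (fun r => r < π r), S (i r) (i (π r))

/-- `(Σ_n)_n ∈ CovMat(α)`: symmetric positive definite, unit diagonal, off-diagonal
entries bounded by `n^{-α}`. -/
def CovMatSeq (α : ℝ) (S : ∀ n : ℕ, Matrix (Fin n) (Fin n) ℝ) : Prop :=
  ∀ n, (S n).IsSymm ∧ (S n).PosDef ∧ (∀ i, S n i i = 1) ∧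
    ∀ i j : Fin n, i ≠ j → |S n i j| ≤ 1 / (n : ℝ) ^ α

/-- Position `r` (0-based) lies in the `j`-th block of sizes `δ 0, δ 1, …`. -/
def inBlock {l : ℕ} (δ : Fin l → ℕ) (j : Fin l) (r : ℕ) : Prop :=
  (∑ j' ∈ Finset.univ.filter (· < j), δ j') ≤ r ∧
    r < ∑ j' ∈ Finset.univ.filter (· ≤ j), δ j'

/-- The family `Y` is a centered Gaussian family with covariance matrix `S`:
every linear combination is a centered real Gaussian with the corresponding variance. -/
def IsCenteredGaussianFamily (P : Measure Ω) {m : ℕ}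
    (Y : Fin m → Ω → ℝ) (S : Matrix (Fin m) (Fin m) ℝ) : Prop :=
  (∀ i, Measurable (Y i)) ∧
  ∀ c : Fin m → ℝ,
    Measure.map (fun ω => ∑ i, c i * Y i ω) P =
      gaussianReal 0 (Real.toNNReal (∑ i, ∑ j, c i * S i j * c j))

/-- The Gaussian triangular scheme `a` constructed from a covariance sequence `S`
via a filling bijection `φ` (with values in `{1,…,Δ_n}`) and Gaussian vectors `Y`. -/
def GaussianScheme (P : Measure Ω) (S : ∀ m, Matrix (Fin m) (Fin m) ℝ)
    (φ : ℕ → ℕ → ℕ → ℕ) (Y : ℕ → ℕ → Ω → ℝ) (a : ℕ → ℕ → ℕ → Ω → ℝ) : Prop :=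
  (∀ n, Set.BijOn (fun p : ℕ × ℕ => φ n p.1 p.2)
      {p : ℕ × ℕ | 1 ≤ p.1 ∧ p.1 ≤ p.2 ∧ p.2 ≤ n} (Set.Icc 1 (Δn n))) ∧
  (∀ n i j, j < i → φ n i j = φ n j i) ∧
  (∀ n, IsCenteredGaussianFamily P (fun t : Fin (Δn n) => Y n (t.1 + 1)) (S (Δn n))) ∧
  (∀ n i j, a n i j = Y n (φ n i j))

/-- Cyclic successor on `Fin k`. -/
def cyc {k : ℕ} (i : Fin k) : Fin k :=
  ⟨(i.1 + 1) % k, Nat.mod_lt _ (Nat.lt_of_le_of_lt (Nat.zero_le _) i.isLt)⟩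

/-- The multiset of edges of the cyclic multigraph of the tuple `t`. -/
def tupleEdges {k : ℕ} (t : Fin k → ℕ) : Multiset (Sym2 ℕ) :=
  Finset.univ.val.map fun i : Fin k => s(t i, t (cyc i))

/-- `kappa t l` = number of distinct `l`-fold edges of `t`. -/
def kappa {k : ℕ} (t : Fin k → ℕ) (l : ℕ) : ℕ :=
  ((tupleEdges t).toFinset.filter fun e => (tupleEdges t).count e = l).card

/-- Number of distinct loops of `t`. -/
def numLoops {k : ℕ} (t : Fin k → ℕ) : ℕ :=
  ((tupleEdges t).toFinset.filter fun e => e.IsDiag).card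

/-- `t` has at least one odd edge. -/
def hasOddEdge {k : ℕ} (t : Fin k → ℕ) : Prop :=
  ∃ e ∈ (tupleEdges t).toFinset, Odd ((tupleEdges t).count e)

/-- `t` has only even edges. -/
def hasOnlyEvenEdges {k : ℕ} (t : Fin k → ℕ) : Prop :=
  ∀ e ∈ (tupleEdges t).toFinset, Even ((tupleEdges t).count e)

/-- Vertex set of the tuple `t`. -/
def verts {k : ℕ} (t : Fin k → ℕ) : Finset ℕ := Finset.image t Finset.univ

/-- The set of `bn`-relevant `k`-tuples with entries in `{1,…,n}`. -/
def relTuples (n bn k : ℕ) : Finset (Fin k → ℕ) :=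
  (Fintype.piFinset fun _ : Fin k => Finset.Icc 1 n).filter
    fun t => ∀ i : Fin k, BRelevant n bn (t i) (t (cyc i))

/-- `t` and `s` have the same profile `κ`. -/
def sameProfile {k : ℕ} (t s : Fin k → ℕ) : Prop :=
  ∀ l ∈ Finset.Icc 1 k, kappa t l = kappa s l

/-- Equivalence class `𝒯(s)` of `s` in `[n]^k_b`. -/
def Tclass (n bn k : ℕ) (s : Fin k → ℕ) : Finset (Fin k → ℕ) :=
  (relTuples n bn k).filter fun t => sameProfile t s

/-- `𝒯^c(s,s')`: pairs of tuples with prescribed profiles having a common edge. -/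
def Tcommon (n bn k : ℕ) (s s' : Fin k → ℕ) : Finset ((Fin k → ℕ) × (Fin k → ℕ)) :=
  ((relTuples n bn k) ×ˢ (relTuples n bn k)).filter fun tt =>
    sameProfile tt.1 s ∧ sameProfile tt.2 s' ∧
      ((tupleEdges tt.1).toFinset ∩ (tupleEdges tt.2).toFinset).Nonempty

/-- `𝒯^c_l(s,s')`: pairs in `𝒯^c(s,s')` with exactly `l` common edges. -/
def TcommonL (n bn k : ℕ) (s s' : Fin k → ℕ) (l : ℕ) :
    Finset ((Fin k → ℕ) × (Fin k → ℕ)) :=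
  (Tcommon n bn k s s').filter fun tt =>
    ((tupleEdges tt.1).toFinset ∩ (tupleEdges tt.2).toFinset).card = l

/-!
A relevant tuple `t` is encoded by its first entry, by the map sending each step `i` to the first
time the vertex `t (i + 1)` is visited, and, for each step reaching a new vertex, by the cyclic
offset of that vertex from `t i`, which takes fewer than `b_n` values. The encoding is injective,
the first-visit map takes at most `k ^ k` values, and the new steps have pairwise distinct edges,
so there are at most `κ_1 + ⋯ + κ_k` of them. If the new steps exhaust all edges, these form a
spanning tree, which a closed walk crosses an even number of times along every edge; hence an odd
edge costs one new step. Part (i) only needs `κ_l ≤ k`.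
-/

variable {k : ℕ}

lemma cyc_eq_finRotate : (cyc : Fin k → Fin k) = finRotate k := by
  funext i
  rcases k with _ | k
  · exact i.elim0
  · ext
    simp [cyc, finRotate_apply, Fin.val_add]

lemma val_cyc_of_lt {i : Fin k} (h : i < cyc i) : (cyc i : ℕ) = i + 1 := by
  have hv : (cyc i : ℕ) = (i + 1) % k := rfl
  rw [Fin.lt_def, hv] at h
  rw [hv]
  rcases Nat.lt_or_ge (i + 1) k with hlt | hge
  · exact Nat.mod_eq_of_lt hlt
  · rw [show (i : ℕ) + 1 = k by omega, Nat.mod_self] at h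
    omega

lemma cyc_le_of_lt {i j : Fin k} (h : i < j) : cyc i ≤ j :=
  Fin.le_def.2 ((Nat.mod_le _ _).trans (Fin.lt_def.1 h))

lemma IsBandwidth.pos {n bn : ℕ} (h : IsBandwidth n bn) (hn : 0 < n) : 0 < bn := by
  rcases h with ⟨-, hodd⟩ | rfl
  exacts [hodd.pos, hn]

lemma mem_relTuples {n bn : ℕ} {t : Fin k → ℕ} :
    t ∈ relTuples n bn k ↔ (∀ i, t i ∈ Icc 1 n) ∧ ∀ i, BRelevant n bn (t i) (t (cyc i)) := by
  simp [relTuples]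

lemma card_tupleEdges (t : Fin k → ℕ) : Multiset.card (tupleEdges t) = k := by
  simp [tupleEdges]

lemma edge_mem_toFinset_tupleEdges (t : Fin k → ℕ) (i : Fin k) :
    s(t i, t (cyc i)) ∈ (tupleEdges t).toFinset :=
  Multiset.mem_toFinset.2 (Multiset.mem_map_of_mem _ (mem_univ i))

lemma count_tupleEdges (t : Fin k → ℕ) (e : Sym2 ℕ) :
    (tupleEdges t).count e = (univ.filter fun i => s(t i, t (cyc i)) = e).card := by
  rw [tupleEdges, Multiset.count_map]
  simp [Finset.card, eq_comm]

lemma count_tupleEdges_mem_Icc {t : Fin k → ℕ} {e : Sym2 ℕ}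
    (he : e ∈ (tupleEdges t).toFinset) : (tupleEdges t).count e ∈ Icc 1 k :=
  mem_Icc.2 ⟨Multiset.one_le_count_iff_mem.2 (Multiset.mem_toFinset.1 he),
    (Multiset.count_le_card _ _).trans (card_tupleEdges t).le⟩

lemma kappa_le (t : Fin k → ℕ) (l : ℕ) : kappa t l ≤ k :=
  calc kappa t l ≤ (tupleEdges t).toFinset.card := card_filter_le _ _
    _ ≤ k := (Multiset.toFinset_card_le _).trans (card_tupleEdges t).le

lemma card_image_profile_le (n bn : ℕ) :
    ((relTuples n bn k).image fun t => fun j : Fin k => kappa t (j.1 + 1)).card ≤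
      (k + 1) ^ k :=
  calc _ ≤ (Fintype.piFinset fun _ : Fin k => range (k + 1)).card :=
        card_le_card <| image_subset_iff.2 fun t _ =>
          Fintype.mem_piFinset.2 fun _ => mem_range.2 (Nat.lt_succ_of_le (kappa_le t _))
    _ = (k + 1) ^ k := by simp

lemma sum_kappa_eq_card_toFinset (t : Fin k → ℕ) :
    ∑ l ∈ Icc 1 k, kappa t l = (tupleEdges t).toFinset.card :=
  (card_eq_sum_card_fiberwise fun _ he => count_tupleEdges_mem_Icc he).symm

lemma sameProfile.sum_kappa_eq {t u : Fin k → ℕ} (h : sameProfile t u) :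
    ∑ l ∈ Icc 1 k, kappa t l = ∑ l ∈ Icc 1 k, kappa u l :=
  sum_congr rfl h

lemma sameProfile.hasOddEdge {t u : Fin k → ℕ} (h : sameProfile t u) (hu : hasOddEdge u) :
    hasOddEdge t := by
  obtain ⟨e, he, hodd⟩ := hu
  have hpos : 0 < kappa t ((tupleEdges u).count e) := by
    rw [h _ (count_tupleEdges_mem_Icc he)]
    exact card_pos.2 ⟨e, mem_filter.2 ⟨he, rfl⟩⟩
  obtain ⟨e', he'⟩ := card_pos.1 hpos
  obtain ⟨he't, hcount⟩ := mem_filter.1 he'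
  exact ⟨e', he't, hcount ▸ hodd⟩

section NewSteps

def firstIdx (t : Fin k → ℕ) (i : Fin k) : Fin k :=
  (univ.filter fun j => t j = t i).min' ⟨i, mem_filter.2 ⟨mem_univ i, rfl⟩⟩

variable {t : Fin k → ℕ} {i j : Fin k}

lemma firstIdx_le_of_apply_eq (h : t j = t i) : firstIdx t i ≤ j :=
  min'_le _ _ (mem_filter.2 ⟨mem_univ j, h⟩)

lemma firstIdx_le (t : Fin k → ℕ) (i : Fin k) : firstIdx t i ≤ i :=
  firstIdx_le_of_apply_eq rfl

lemma apply_firstIdx (t : Fin k → ℕ) (i : Fin k) : t (firstIdx t i) = t i :=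
  (mem_filter.1 (min'_mem (univ.filter fun j => t j = t i) _)).2

lemma firstIdx_congr (h : t i = t j) : firstIdx t i = firstIdx t j := by
  unfold firstIdx
  congr 1
  simp only [h]

def IsNewStep (t : Fin k → ℕ) (i : Fin k) : Prop := i < firstIdx t (cyc i)

def newSteps (t : Fin k → ℕ) : Finset (Fin k) := univ.filter (IsNewStep t)

namespace IsNewStep

lemma lt_cyc (h : IsNewStep t i) : i < cyc i := lt_of_lt_of_le h (firstIdx_le t _)

lemma val_cyc (h : IsNewStep t i) : (cyc i : ℕ) = i + 1 := val_cyc_of_lt h.lt_cyc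

lemma firstIdx_cyc (h : IsNewStep t i) : firstIdx t (cyc i) = cyc i := by
  have hle := Fin.le_def.1 (firstIdx_le t (cyc i))
  have hlt := Fin.lt_def.1 h
  exact Fin.ext (by rw [h.val_cyc] at hle ⊢; omega)

lemma apply_ne (h : IsNewStep t i) (hj : j ≤ i) : t j ≠ t (cyc i) := fun he =>
  (lt_of_lt_of_le h (firstIdx_le_of_apply_eq he)).not_ge hj

end IsNewStep

lemma edge_injOn_newSteps (t : Fin k → ℕ) :
    Set.InjOn (fun i => s(t i, t (cyc i))) (newSteps t) := by
  suffices hne : ∀ i i', IsNewStep t i' → i < i' → s(t i, t (cyc i)) ≠ s(t i', t (cyc i')) by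
    intro i hi i' hi' he
    simp only [newSteps, coe_filter, mem_univ, true_and] at hi hi'
    by_contra hii'
    rcases lt_or_gt_of_ne hii' with hlt | hlt
    exacts [hne i i' hi' hlt he, hne i' i hi hlt he.symm]
  intro i i' hi' hlt he
  -- the vertex first reached at step `i'` cannot lie on the earlier edge `i`
  have hmem : t (cyc i') ∈ s(t i, t (cyc i)) := he ▸ Sym2.mem_mk_right _ _
  rcases Sym2.mem_iff.1 hmem with h | h
  exacts [hi'.apply_ne hlt.le h.symm, hi'.apply_ne (cyc_le_of_lt hlt) h.symm]

lemma card_newSteps_le (t : Fin k → ℕ) :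
    (newSteps t).card ≤ (tupleEdges t).toFinset.card :=
  card_le_card_of_injOn _ (fun i _ => edge_mem_toFinset_tupleEdges t i) (edge_injOn_newSteps t)

end NewSteps

section Parity

variable {t : Fin k → ℕ} {i j : Fin k}

/-- Along the tree formed by the new steps, the parity of the number of traversals of `e` on the
path from the starting vertex to `t j`. -/
def potential (t : Fin k → ℕ) (e : Sym2 ℕ) (j : Fin k) : ZMod 2 :=
  if hlt : firstIdx t j < j then potential t e (firstIdx t j)
  else if hj : (j : ℕ) = 0 then 0
  else
    let p : Fin k := ⟨j - 1, by omega⟩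
    potential t e p + if s(t p, t j) = e then 1 else 0
termination_by (j : ℕ)
decreasing_by all_goals omega

lemma potential_firstIdx (t : Fin k → ℕ) (e : Sym2 ℕ) (j : Fin k) :
    potential t e (firstIdx t j) = potential t e j := by
  rcases (firstIdx_le t j).lt_or_eq with hlt | heq
  · conv_rhs => rw [potential, dif_pos hlt]
  · rw [heq]

lemma potential_congr (e : Sym2 ℕ) (h : t i = t j) : potential t e i = potential t e j := by
  rw [← potential_firstIdx t e i, firstIdx_congr h, potential_firstIdx]

lemma IsNewStep.potential_cyc (h : IsNewStep t i) (e : Sym2 ℕ) :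
    potential t e (cyc i) = potential t e i + if s(t i, t (cyc i)) = e then 1 else 0 := by
  have hpred : (⟨(cyc i : ℕ) - 1, by omega⟩ : Fin k) = i := Fin.ext (by simp [h.val_cyc])
  rw [potential, dif_neg (by rw [h.firstIdx_cyc]; exact lt_irrefl _),
    dif_neg (by rw [h.val_cyc]; omega), hpred]

lemma even_count_of_potential (e : Sym2 ℕ) (χ : Fin k → ZMod 2)
    (hχ : ∀ i, χ i + χ (cyc i) = if s(t i, t (cyc i)) = e then 1 else 0) :
    Even ((tupleEdges t).count e) := by
  rw [← ZMod.natCast_eq_zero_iff_even, count_tupleEdges, ← sum_boole,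
    ← sum_congr rfl fun i _ => hχ i, sum_add_distrib, cyc_eq_finRotate,
    Equiv.sum_comp (finRotate k) χ]
  exact CharTwo.add_self_eq_zero _

lemma card_newSteps_lt_of_hasOddEdge (hodd : hasOddEdge t) :
    (newSteps t).card < (tupleEdges t).toFinset.card := by
  refine (card_newSteps_le t).lt_of_ne fun hcard => ?_
  obtain ⟨e, -, hodd⟩ := hodd
  have himage : (newSteps t).image (fun i => s(t i, t (cyc i))) = (tupleEdges t).toFinset :=
    eq_of_subset_of_card_le (image_subset_iff.2 fun i _ => edge_mem_toFinset_tupleEdges t i)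
      (by rw [card_image_of_injOn (edge_injOn_newSteps t), hcard])
  refine Nat.not_even_iff_odd.2 hodd (even_count_of_potential e (potential t e) fun i => ?_)
  obtain ⟨i₀, hi₀, he⟩ := mem_image.1 (himage ▸ edge_mem_toFinset_tupleEdges t i)
  have hstep := (mem_filter.1 hi₀).2.potential_cyc e
  rw [← he]
  rcases Sym2.eq_iff.1 he with ⟨h1, h2⟩ | ⟨h1, h2⟩
  · rw [← potential_congr e h1, ← potential_congr e h2, hstep, ← add_assoc,
      CharTwo.add_self_eq_zero, zero_add]
  · rw [← potential_congr e h1, ← potential_congr e h2, hstep, add_comm, ← add_assoc,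
      CharTwo.add_self_eq_zero, zero_add]

end Parity

section Encoding

variable {n bn : ℕ}

/-- The cyclic offset `y - x` modulo `n`, shifted by the half-bandwidth so that the offsets of
`bn`-relevant pairs fill `0, …, bn - 1`. -/
def offset (n bn x y : ℕ) : ℕ := (((y : ℤ) - x + ((bn - 1) / 2 : ℕ)) % n).toNat

lemma offset_lt (hband : IsBandwidth n bn) {x y : ℕ} (hx : x ∈ Icc 1 n) (hy : y ∈ Icc 1 n)
    (hxy : BRelevant n bn x y) : offset n bn x y < bn := by
  rw [mem_Icc] at hx hy
  have hn : (0 : ℤ) < n := by omega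
  rcases hband with ⟨hlt, h, rfl⟩ | hbn
  · have hh : (2 * h + 1 - 1) / 2 = h := by omega
    rw [offset, hh]
    suffices ∃ c : ℤ, 0 ≤ (y : ℤ) - x + h + n * c ∧ (y : ℤ) - x + h + n * c ≤ 2 * h by
      obtain ⟨c, h0, h1⟩ := this
      rw [← Int.add_mul_emod_self_left, Int.emod_eq_of_lt h0 (by omega)]
      omega
    rw [BRelevant, hh] at hxy
    rcases hxy with hb | hb | hb
    · omega
    · exact ⟨0, by have := abs_le.1 hb; omega⟩
    · rcases le_abs'.1 hb with hb | hb
      exacts [⟨-1, by omega⟩, ⟨1, by omega⟩]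
  · have := Int.emod_lt_of_pos ((y : ℤ) - x + ((bn - 1) / 2 : ℕ)) hn
    have := Int.emod_nonneg ((y : ℤ) - x + ((bn - 1) / 2 : ℕ)) hn.ne'
    rw [offset]
    omega

lemma eq_of_offset_eq {x y y' : ℕ} (hy : y ∈ Icc 1 n) (hy' : y' ∈ Icc 1 n)
    (h : offset n bn x y = offset n bn x y') : y = y' := by
  rw [mem_Icc] at hy hy'
  have hn : (0 : ℤ) < n := by omega
  have hmod : (y : ℤ) - x + ((bn - 1) / 2 : ℕ) ≡ (y' : ℤ) - x + ((bn - 1) / 2 : ℕ) [ZMOD n] := by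
    have hcast := congrArg (Nat.cast : ℕ → ℤ) h
    rwa [offset, offset, Int.toNat_of_nonneg (Int.emod_nonneg _ hn.ne'),
      Int.toNat_of_nonneg (Int.emod_nonneg _ hn.ne')] at hcast
  have hdvd : (n : ℤ) ∣ (y' : ℤ) - y := by simpa using hmod.dvd
  have := Int.eq_zero_of_abs_lt_dvd hdvd (abs_lt.2 ⟨by omega, by omega⟩)
  omega

def firstVisits (t : Fin k → ℕ) (i : Fin k) : Fin k := firstIdx t (cyc i)

def stepCode (n bn : ℕ) (t : Fin k → ℕ) (i : Fin k) : ℕ :=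
  if IsNewStep t i then offset n bn (t i) (t (cyc i)) else 0

lemma eq_of_stepCode_eq (hk : 0 < k) {t t' : Fin k → ℕ}
    (ht : t ∈ relTuples n bn k) (ht' : t' ∈ relTuples n bn k) (h0 : t ⟨0, hk⟩ = t' ⟨0, hk⟩)
    (hfirst : firstVisits t = firstVisits t') (hcode : stepCode n bn t = stepCode n bn t') :
    t = t' := by
  suffices H : ∀ m (i : Fin k), (i : ℕ) ≤ m → t i = t' i from funext fun i => H i i le_rfl
  intro m
  induction m with
  | zero =>
    intro i hi
    obtain rfl : i = ⟨0, hk⟩ := Fin.ext (Nat.le_zero.1 hi)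
    exact h0
  | succ m ih =>
    intro i hi
    rcases Nat.lt_or_ge i (m + 1) with hlt | hge
    · exact ih i (by omega)
    let p : Fin k := ⟨m, by omega⟩
    have hcyc : cyc p = i :=
      Fin.ext (show (m + 1) % k = i by rw [Nat.mod_eq_of_lt (by omega)]; omega)
    have hfirst_p : firstIdx t (cyc p) = firstIdx t' (cyc p) := congrFun hfirst p
    rw [← hcyc]
    by_cases hnew : IsNewStep t p
    · have hnew' : IsNewStep t' p := by rwa [IsNewStep, ← hfirst_p]
      have hcode_p := congrFun hcode p
      simp only [stepCode, if_pos hnew, if_pos hnew', ih p le_rfl] at hcode_p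
      exact eq_of_offset_eq ((mem_relTuples.1 ht).1 _) ((mem_relTuples.1 ht').1 _) hcode_p
    · rw [← apply_firstIdx t, ← apply_firstIdx t' (cyc p), ← hfirst_p]
      exact ih _ (Fin.le_def.1 (not_lt.1 hnew))

lemma stepCode_mem_piFinset (hband : IsBandwidth n bn) {t t₀ : Fin k → ℕ}
    (ht : t ∈ relTuples n bn k) (hfirst : firstVisits t = firstVisits t₀) :
    stepCode n bn t ∈ Fintype.piFinset fun i => if IsNewStep t₀ i then range bn else {0} := by
  obtain ⟨hmem, hrel⟩ := mem_relTuples.1 ht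
  refine Fintype.mem_piFinset.2 fun i => ?_
  have hnew : IsNewStep t i ↔ IsNewStep t₀ i := by
    change i < firstVisits t i ↔ i < firstVisits t₀ i
    rw [hfirst]
  by_cases hi : IsNewStep t i
  · simp only [stepCode, if_pos hi, if_pos (hnew.1 hi), mem_range]
    exact offset_lt hband (hmem i) (hmem _) (hrel i)
  · simp only [stepCode, if_neg hi, if_neg (mt hnew.2 hi), mem_singleton]

lemma card_filter_firstVisits_eq_le (hk : 0 < k) (hband : IsBandwidth n bn)
    {S : Finset (Fin k → ℕ)} (hS : S ⊆ relTuples n bn k) (t₀ : Fin k → ℕ) :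
    (S.filter fun t => firstVisits t = firstVisits t₀).card ≤ n * bn ^ (newSteps t₀).card := by
  let codes : Finset (Fin k → ℕ) :=
    Fintype.piFinset fun i => if IsNewStep t₀ i then range bn else {0}
  have hcodes : codes.card = bn ^ (newSteps t₀).card := by
    simp only [codes, Fintype.card_piFinset, apply_ite card, card_range, card_singleton]
    rw [prod_ite, prod_const, prod_const_one, mul_one, newSteps]
  calc _ ≤ (Icc 1 n ×ˢ codes).card := by
        refine card_le_card_of_injOn (fun t => (t ⟨0, hk⟩, stepCode n bn t)) ?_ ?_
        · intro t ht
          obtain ⟨htS, hfirst⟩ := mem_filter.1 (mem_coe.1 ht)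
          exact mem_product.2
            ⟨(mem_relTuples.1 (hS htS)).1 _, stepCode_mem_piFinset hband (hS htS) hfirst⟩
        · intro t ht t' ht' htt'
          obtain ⟨htS, hfirst⟩ := mem_filter.1 (mem_coe.1 ht)
          obtain ⟨ht'S, hfirst'⟩ := mem_filter.1 (mem_coe.1 ht')
          exact eq_of_stepCode_eq hk (hS htS) (hS ht'S) (congrArg Prod.fst htt')
            (hfirst.trans hfirst'.symm) (congrArg Prod.snd htt')
    _ = n * bn ^ (newSteps t₀).card := by
        rw [card_product, hcodes, Nat.card_Icc, Nat.add_sub_cancel]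

lemma card_le_of_card_newSteps_le (hk : 0 < k) (hband : IsBandwidth n bn) (hbn : 0 < bn)
    {S : Finset (Fin k → ℕ)} (hS : S ⊆ relTuples n bn k) {E : ℕ}
    (hE : ∀ t ∈ S, (newSteps t).card ≤ E) : S.card ≤ k ^ k * (n * bn ^ E) := by
  calc S.card ≤ (n * bn ^ E) * (S.image firstVisits).card := by
        refine card_le_mul_card_image _ _ fun _ hσ => ?_
        obtain ⟨t₀, ht₀, rfl⟩ := mem_image.1 hσ
        exact (card_filter_firstVisits_eq_le hk hband hS t₀).trans
          (Nat.mul_le_mul_left _ (Nat.pow_le_pow_right hbn (hE t₀ ht₀)))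
    _ ≤ (n * bn ^ E) * k ^ k :=
        Nat.mul_le_mul_left _ (by simpa using card_le_univ (S.image firstVisits))
    _ = k ^ k * (n * bn ^ E) := mul_comm _ _

end Encoding

/-- Bounds on the number and the size of profile equivalence classes
of `b_n`-relevant tuples. -/
theorem stmt16 (b : ℕ → ℕ) (hband : ∀ m, 1 ≤ m → IsBandwidth m (b m))
    (n k : ℕ) (hk : 0 < k) (hn : 0 < n) :
    ((relTuples n (b n) k).image (fun t => fun j : Fin k => kappa t (j.1 + 1))).card ≤
        (k + 1) ^ k ∧
    ∀ u ∈ relTuples n (b n) k,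
      (Tclass n (b n) k u).card ≤
          k ^ k * (n * b n ^ (∑ l ∈ Finset.Icc 1 k, kappa u l)) ∧
      (hasOddEdge u →
        (Tclass n (b n) k u).card ≤
          k ^ k * (n * b n ^ ((∑ l ∈ Finset.Icc 1 k, kappa u l) - 1))) := by
  have hbn : IsBandwidth n (b n) := hband n hn
  have hcount (u : Fin k → ℕ) (E : ℕ) :=
    card_le_of_card_newSteps_le (S := Tclass n (b n) k u) (E := E) hk hbn (hbn.pos hn)
      (filter_subset _ _)
  refine ⟨card_image_profile_le n (b n), fun u _ =>
    ⟨hcount u _ fun t ht => ?_, fun hodd => hcount u _ fun t ht => ?_⟩⟩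
  all_goals
    have hprof : sameProfile t u := (mem_filter.1 ht).2
    rw [← hprof.sum_kappa_eq, sum_kappa_eq_card_toFinset]
  · exact card_newSteps_le t
  · exact Nat.le_sub_one_of_lt (card_newSteps_lt_of_hasOddEdge (hprof.hasOddEdge hodd))

end RMT
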